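/- Let L be an orthomodular ortholattice. Then L satisfies the distributive inference: for all a, b, c, d, e, f ∈ L, if d ≤ a →₁ c and d ⊓ (b →₁ c) ≤ e and e ⊔ f ≤ a ≡c b, then d ⊓ (e ⊔ f) = (d ⊓ e) ⊔ (d ⊓ f) — if and only if L satisfies the 3OA law: for all a, b, c ∈ L, (a →₁ c) ⊓ (a ≡c b) ≤ b →₁ c. -/

import Mathlib

/-- An ortholattice: a bounded lattice with an orthocomplementation. -/
class Ortholattice (α : Type*) extends Lattice α, BoundedOrder α, Compl α where
  compl_compl : ∀ x : α, xᶜᶜ = x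
  compl_antitone : ∀ x y : α, x ≤ y → yᶜ ≤ xᶜ
  inf_compl : ∀ x : α, x ⊓ xᶜ = ⊥
  sup_compl : ∀ x : α, x ⊔ xᶜ = ⊤

/-- The Sasaki implication `a →₁ b = aᶜ ⊔ (a ⊓ b)`. -/
def olImp1 {α : Type*} [Ortholattice α] (a b : α) : α := aᶜ ⊔ (a ⊓ b)

/-- The 3-variable orthoarguesian identity
`a ≡c b = ((a →₁ c) ⊓ (b →₁ c)) ⊔ ((aᶜ →₁ c) ⊓ (bᶜ →₁ c))`. -/
def oa3 {α : Type*} [Ortholattice α] (c a b : α) : α :=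
  (olImp1 a c ⊓ olImp1 b c) ⊔ (olImp1 aᶜ c ⊓ olImp1 bᶜ c)

/-- The 4-variable orthoarguesian identity
`a ≡(c,d) b = (a ≡d b) ⊔ ((a ≡d c) ⊓ (b ≡d c))`. -/
def oa4 {α : Type*} [Ortholattice α] (c d a b : α) : α :=
  oa3 d a b ⊔ (oa3 d a c ⊓ oa3 d b c)

/-!
The 3OA law gives the distributive inference without orthomodularity: under its hypotheses
`d ⊓ (e ⊔ f) ≤ (a →₁ c) ⊓ (a ≡c b) ≤ b →₁ c`, so `d ⊓ (e ⊔ f) ≤ d ⊓ (b →₁ c) ≤ e`.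
Conversely, take `d = a →₁ c` and for `e`, `f` the two joinands of `a ≡c b`; distributivity
reduces the 3OA law to `(a →₁ c) ⊓ (aᶜ →₁ c) ⊓ (bᶜ →₁ c) ≤ b →₁ c`. This follows from the
orthomodular facts `(a →₁ c) ⊓ (aᶜ →₁ c) ≤ c` and `c ⊓ (bᶜ →₁ c) ≤ b →₁ c`, each obtained
by splitting along a suitable `p ≤ z` as `z = p ⊔ (pᶜ ⊓ z)`, with `p = a ⊓ c`, resp. `p = bᶜ ⊓ c`.
-/

namespace Ortholattice

variable {α : Type*} [Ortholattice α]

lemma compl_le_compl {x y : α} (h : x ≤ y) : yᶜ ≤ xᶜ := compl_antitone x y h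

lemma le_compl_comm {x y : α} : x ≤ yᶜ ↔ y ≤ xᶜ :=
  ⟨fun h => compl_compl y ▸ compl_le_compl h, fun h => compl_compl x ▸ compl_le_compl h⟩

lemma compl_sup (x y : α) : (x ⊔ y)ᶜ = xᶜ ⊓ yᶜ :=
  le_antisymm (le_inf (compl_le_compl le_sup_left) (compl_le_compl le_sup_right)) <|
    le_compl_comm.mp <| sup_le (le_compl_comm.mp inf_le_left) (le_compl_comm.mp inf_le_right)

lemma compl_inf (x y : α) : (x ⊓ y)ᶜ = xᶜ ⊔ yᶜ := by
  rw [← compl_compl (xᶜ ⊔ yᶜ), compl_sup, compl_compl, compl_compl]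

end Ortholattice

def IsOrthomodular (α : Type*) [Ortholattice α] : Prop :=
  ∀ a b : α, a ≤ b → a ⊔ (aᶜ ⊓ b) = b

def DistribInference (α : Type*) [Ortholattice α] : Prop :=
  ∀ a b c d e f : α, d ≤ olImp1 a c → d ⊓ olImp1 b c ≤ e → e ⊔ f ≤ oa3 c a b →
    d ⊓ (e ⊔ f) = (d ⊓ e) ⊔ (d ⊓ f)

def OA3Law (α : Type*) [Ortholattice α] : Prop :=
  ∀ a b c : α, olImp1 a c ⊓ oa3 c a b ≤ olImp1 b c

namespace IsOrthomodular

variable {α : Type*} [Ortholattice α] (hOM : IsOrthomodular α)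
include hOM

lemma inf_compl_sup_of_le {p q : α} (h : p ≤ q) : q ⊓ (qᶜ ⊔ p) = p := by
  have := congrArg (·ᶜ) (hOM qᶜ pᶜ (Ortholattice.compl_le_compl h))
  simpa only [Ortholattice.compl_sup, Ortholattice.compl_inf, Ortholattice.compl_compl] using this

lemma le_sup_of_compl_inf_le {p z r : α} (hp : p ≤ z) (hr : pᶜ ⊓ z ≤ r) : z ≤ p ⊔ r :=
  hOM p z hp ▸ sup_le_sup_left hr p

lemma olImp1_inf_olImp1_compl_le (a c : α) : olImp1 a c ⊓ olImp1 aᶜ c ≤ c := by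
  have hac : a ⊓ c ≤ olImp1 a c ⊓ olImp1 aᶜ c :=
    le_inf le_sup_right (inf_le_left.trans ((Ortholattice.compl_compl a).ge.trans le_sup_left))
  have hx : (a ⊓ c)ᶜ ⊓ olImp1 a c = aᶜ := by
    have := hOM.inf_compl_sup_of_le (Ortholattice.compl_le_compl (inf_le_left : a ⊓ c ≤ a))
    rwa [Ortholattice.compl_compl, sup_comm] at this
  have hy : aᶜ ⊓ olImp1 aᶜ c = aᶜ ⊓ c := hOM.inf_compl_sup_of_le inf_le_left
  calc olImp1 a c ⊓ olImp1 aᶜ c ≤ (a ⊓ c) ⊔ (aᶜ ⊓ c) :=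
        hOM.le_sup_of_compl_inf_le hac (by rw [← inf_assoc, hx, hy])
    _ ≤ c := sup_le inf_le_right inf_le_right

lemma inf_olImp1_compl_le_olImp1 (b c : α) : c ⊓ olImp1 bᶜ c ≤ olImp1 b c := by
  have hw : bᶜ ⊓ c ≤ c ⊓ olImp1 bᶜ c := le_inf inf_le_right le_sup_right
  have hb : (bᶜ ⊓ c)ᶜ ⊓ olImp1 bᶜ c = b := by
    rw [olImp1, Ortholattice.compl_compl]
    have := hOM.inf_compl_sup_of_le (Ortholattice.le_compl_comm.mp (inf_le_left : bᶜ ⊓ c ≤ bᶜ))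
    rwa [Ortholattice.compl_compl, sup_comm] at this
  calc c ⊓ olImp1 bᶜ c ≤ (bᶜ ⊓ c) ⊔ (b ⊓ c) :=
        hOM.le_sup_of_compl_inf_le hw (by rw [inf_left_comm, hb, inf_comm])
    _ ≤ olImp1 b c := sup_le_sup_right inf_le_left _

theorem oa3Law_of_distribInference (h : DistribInference α) : OA3Law α := by
  intro a b c
  show olImp1 a c ⊓ (_ ⊔ _) ≤ _
  rw [h a b c (olImp1 a c) _ _ le_rfl le_rfl le_rfl]
  refine sup_le (inf_le_right.trans inf_le_right) ?_
  calc olImp1 a c ⊓ (olImp1 aᶜ c ⊓ olImp1 bᶜ c)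
      ≤ c ⊓ olImp1 bᶜ c := by
        rw [← inf_assoc]; exact inf_le_inf_right _ (hOM.olImp1_inf_olImp1_compl_le a c)
    _ ≤ olImp1 b c := hOM.inf_olImp1_compl_le_olImp1 b c

end IsOrthomodular

theorem distribInference_of_oa3Law {α : Type*} [Ortholattice α] (h : OA3Law α) :
    DistribInference α := by
  intro a b c d e f hd hde hef
  refine le_antisymm ?_ (sup_le (inf_le_inf_left d le_sup_left) (inf_le_inf_left d le_sup_right))
  have hb : d ⊓ (e ⊔ f) ≤ olImp1 b c :=
    (inf_le_inf hd hef).trans (h a b c)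
  exact le_sup_of_le_left (le_inf inf_le_left ((le_inf inf_le_left hb).trans hde))

/-- An orthomodular ortholattice satisfies the distributive inference iff it
satisfies the 3OA law. -/
theorem stmt_9 (α : Type*) [Ortholattice α]
    (hOM : ∀ a b : α, a ≤ b → a ⊔ (aᶜ ⊓ b) = b) :
    (∀ a b c d e f : α,
        d ≤ olImp1 a c → d ⊓ olImp1 b c ≤ e → e ⊔ f ≤ oa3 c a b →
          d ⊓ (e ⊔ f) = (d ⊓ e) ⊔ (d ⊓ f)) ↔
      (∀ a b c : α, olImp1 a c ⊓ oa3 c a b ≤ olImp1 b c) :=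
  ⟨IsOrthomodular.oa3Law_of_distribInference hOM, distribInference_of_oa3Law⟩
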